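/- Let C_a, C_t, N_a, s be positive reals and J ≥ 2 a natural number. If C_a < C_t and (C_a/C_t)^{1/(2(J−1))} ≤ x < 1, then for every integer l with 1 ≤ l ≤ J one has γ_x(l) ≤ γ_x(J) (Proposition 1, Case I, second subcase: the optimal active-IRS index is l = J). -/
import Mathlib


open Real

/-- Received SNR in the multi-IRS WIT system, as a function of the AIRS index `l`:
`γ_x(l) = C_a·C_t·N_a·x^{2(J−1)} / (s·C_a·x^{2(J−l)} + s·C_t·x^{2(l−1)} + s²)`. -/
noncomputable def snr (Ca Ct Na s : ℝ) (J : ℕ) (x l : ℝ) : ℝ :=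
  Ca * Ct * Na * x ^ (2 * ((J : ℝ) - 1)) /
    (s * Ca * x ^ (2 * ((J : ℝ) - l)) + s * Ct * x ^ (2 * (l - 1)) + s ^ 2)

/-- Proposition 1, Case I, second subcase: if `C_a < C_t` and
`(C_a/C_t)^{1/(2(J−1))} ≤ x < 1`, then among integer AIRS locations `1 ≤ l ≤ J`,
the location `l = J` maximizes the received SNR. -/
theorem stmt_3 (Ca Ct Na s : ℝ) (hCa : 0 < Ca) (hCt : 0 < Ct) (hNa : 0 < Na) (hs : 0 < s)
    (J : ℕ) (hJ : 2 ≤ J) (x : ℝ)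
    (hCaCt : Ca < Ct)
    (hxlb : (Ca / Ct) ^ (1 / (2 * ((J : ℝ) - 1))) ≤ x) (hx1 : x < 1) :
    ∀ l : ℤ, 1 ≤ l → l ≤ (J : ℤ) →
      snr Ca Ct Na s J x (l : ℝ) ≤ snr Ca Ct Na s J x (J : ℝ) := by
  intro l hl1 hlJ
  have hx0 : 0 < x := lt_of_lt_of_le (Real.rpow_pos_of_pos (div_pos hCa hCt) _) hxlb
  have hJ2 : (2:ℝ) ≤ (J:ℝ) := by exact_mod_cast hJ
  have hl1' : (1:ℝ) ≤ (l:ℝ) := by exact_mod_cast hl1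
  have hlJ' : (l:ℝ) ≤ (J:ℝ) := by exact_mod_cast hlJ
  set a : ℝ := (J:ℝ) - (l:ℝ) with ha_def
  set b : ℝ := (l:ℝ) - 1 with hb_def
  have ha : 0 ≤ a := by simp [ha_def]; linarith
  have hb : 0 ≤ b := by simp [hb_def]; linarith
  have hJ1pos : (0:ℝ) < (J:ℝ) - 1 := by linarith
  have hc0 : (2 * ((J:ℝ) - 1)) ≠ 0 := by positivity
  have hxJ : Ca / Ct ≤ x ^ (2 * ((J:ℝ)-1)) := by
    have h := Real.rpow_le_rpow (Real.rpow_nonneg (div_pos hCa hCt).le _) hxlb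
      (by positivity : (0:ℝ) ≤ 2*((J:ℝ)-1))
    rwa [← Real.rpow_mul (div_pos hCa hCt).le, one_div_mul_cancel hc0, Real.rpow_one] at h
  have hxb : x ^ (2 * ((J:ℝ)-1)) ≤ x ^ (2*b) := by
    apply Real.rpow_le_rpow_of_exponent_ge hx0 hx1.le
    simp [hb_def]; linarith
  have hCab : Ca ≤ Ct * x ^ (2*b) := by
    have : Ca / Ct ≤ x ^ (2*b) := le_trans hxJ hxb
    rw [div_le_iff₀ hCt] at this
    linarith [this]
  have hxa1 : x ^ (2*a) ≤ 1 := Real.rpow_le_one hx0.le hx1.le (by positivity)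
  have hsplit : x ^ (2 * ((J:ℝ)-1)) = x ^ (2*b) * x ^ (2*a) := by
    rw [← Real.rpow_add hx0]
    congr 1
    simp [ha_def, hb_def]; ring
  have hmul : Ca * (1 - x ^ (2*a)) ≤ Ct * x ^ (2*b) * (1 - x ^ (2*a)) :=
    mul_le_mul_of_nonneg_right hCab (by linarith)
  have key : Ca + Ct * x ^ (2*((J:ℝ)-1)) ≤ Ca * x ^ (2*a) + Ct * x ^ (2*b) := by
    rw [hsplit]; nlinarith [hmul]
  unfold snr
  rw [sub_self, mul_zero, Real.rpow_zero]
  have hxa : x ^ (2*a) = x ^ (2 * ((J:ℝ) - (l:ℝ))) := rfl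
  have hxb' : x ^ (2*b) = x ^ (2 * ((l:ℝ) - 1)) := rfl
  apply div_le_div_of_nonneg_left
  · positivity
  · positivity
  · rw [← hxa, ← hxb']
    have hJ1 : x ^ (2 * ((J:ℝ) - 1)) = x ^ (2 * (((J:ℝ)) - 1)) := rfl
    nlinarith [key, hs]
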